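/- arXiv:2205.10917 — 7 statements merged into one kernel-verified Lean document; each statement's English description precedes it below -/
import Mathlib

section
/- For any small category C, the category-of-elements functor ∫_C : (Cᵒᵖ ⥤ Set) ⥤ Cat, sending a presheaf X to its category of elements ∫_C X, is left adjoint to the C-nerve functor ν_C : Cat ⥤ (Cᵒᵖ ⥤ Set) defined on objects by ν_C(A)(c) = the set of functors from the slice category C/c to A, with contravariant action on h : d → c given by precomposition with the post-composition functor C/h : C/d → C/c. -/
open CategoryTheory Opposite Limits

universe u

namespace HS

variable {C : Type u} [SmallCategory C]

/-- The (paper-style) category of elements of a presheaf `X`, fibered over `C`: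
objects are pairs `(c, x)` with `x ∈ X(c)`; a morphism `(d, y) ⟶ (c, x)` is a
morphism `g : d ⟶ c` of `C` with `X(g)(x) = y`. -/
@[ext]
structure Elts (X : Cᵒᵖ ⥤ Type u) : Type u where
  base : C
  elt : X.obj (op base)

instance (X : Cᵒᵖ ⥤ Type u) : Category.{u} (Elts X) where
  Hom a b := { g : a.base ⟶ b.base // X.map g.op b.elt = a.elt }
  id a := ⟨𝟙 a.base, by simp⟩
  comp {a b c} f g := ⟨f.1 ≫ g.1, by
    rw [op_comp, X.map_comp, types_comp_apply, g.2, f.2]⟩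

/-- The projection `∫X ⥤ C`. -/
def proj (X : Cᵒᵖ ⥤ Type u) : Elts X ⥤ C where
  obj a := a.base
  map f := f.1

/-- The functor `∫Y ⥤ ∫X` induced by a map of presheaves `f : Y ⟶ X`. -/
def eltsMap {Y X : Cᵒᵖ ⥤ Type u} (f : Y ⟶ X) : Elts Y ⥤ Elts X where
  obj a := ⟨a.base, f.app _ a.elt⟩
  map {a b} g := ⟨g.1, by
    rw [← FunctorToTypes.naturality, g.2]⟩

/-- The category-of-elements functor `∫ : (Cᵒᵖ ⥤ Set) ⥤ Cat`. -/
def elementsFunctor (C : Type u) [SmallCategory C] : (Cᵒᵖ ⥤ Type u) ⥤ Cat.{u, u} where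
  obj X := Cat.of (Elts X)
  map f := (eltsMap f).toCatHom

/-- The `C`-nerve functor `ν : Cat ⥤ (Cᵒᵖ ⥤ Set)`, with `ν(A)(c) = Fun(C/c, A)`,
acting contravariantly by precomposition with post-composition functors `C/h`. -/
def nerve (C : Type u) [SmallCategory C] : Cat.{u, u} ⥤ (Cᵒᵖ ⥤ Type u) where
  obj A :=
    { obj := fun c => Over c.unop ⥤ A
      map := fun h => TypeCat.ofHom fun P => Over.map h.unop ⋙ P
      map_id := fun c => by
        ext P
        show Over.map (𝟙 c.unop) ⋙ P = P
        rw [Over.mapId_eq]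
        rfl
      map_comp := fun h k => by
        ext P
        show Over.map (k.unop ≫ h.unop) ⋙ P = _
        rw [Over.mapComp_eq]
        rfl }
  map F := { app := fun c => TypeCat.ofHom fun P => P ⋙ F.toFunctor }

end HS

/-!
The unit sends `x ∈ X(c)` to the functor `C/c ⥤ ∫X`, `(f : d ⟶ c) ↦ (d, X(f) x)`. The counit
`∫ν(B) ⥤ B` evaluates a functor `P : C/c ⥤ B` at the terminal object `𝟙 c`; since `Over.mk (𝟙 c)`
is terminal, the image of a morphism `g` is forced to be `P` applied to the unique map `g ⟶ 𝟙`, and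
this uniqueness is what makes the counit functorial. In the triangle identities the objects on the
two sides agree only propositionally (by functoriality of `X` and unit laws in `C`), so these
equalities of functors are proved with `Functor.hext`.
-/

namespace CategoryTheory

variable {D E : Type*} [Category D] [Category E]

lemma Functor.map_heq (P : D ⥤ E) {U V U' V' : D} (hU : U = U') (hV : V = V') {m : U ⟶ V}
    {k : U' ⟶ V'} (h : m ≍ k) : P.map m ≍ P.map k := by
  subst hU hV
  rw [eq_of_heq h]

lemma Limits.IsTerminal.eqToHom_comp_map_eq (P : D ⥤ E) {T U U' : D} (hT : IsTerminal T)
    (e : U = U') {Z : E} (p : Z = P.obj U) (q : Z = P.obj U') (k : U ⟶ T) (k' : U' ⟶ T) :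
    eqToHom p ≫ P.map k = eqToHom q ≫ P.map k' := by
  subst e
  rw [hT.hom_ext k k']

lemma Over.map_obj_mk_id {c d : D} (f : d ⟶ c) : (Over.map f).obj (Over.mk (𝟙 d)) = Over.mk f :=
  congrArg Over.mk (Category.id_comp f)

end CategoryTheory

namespace HS

variable {C : Type u} [SmallCategory C]

namespace Elts

variable {X : Cᵒᵖ ⥤ Type u}

lemma hom_heq {a a' b b' : Elts X} (ha : a = a') (hb : b = b') {f : a ⟶ b} {f' : a' ⟶ b'}
    (h : f.1 ≍ f'.1) : f ≍ f' := by
  subst ha hb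
  exact heq_of_eq (Subtype.ext (eq_of_heq h))

def ofOver {c : C} (x : X.obj (op c)) : Over c ⥤ Elts X where
  obj f := ⟨f.left, X.map f.hom.op x⟩
  map k := ⟨k.left, by simp [← Functor.map_comp_apply, ← op_comp]⟩

lemma ofOver_obj_mk_id {c : C} (x : X.obj (op c)) : (ofOver x).obj (Over.mk (𝟙 c)) = ⟨c, x⟩ :=
  Elts.ext rfl (heq_of_eq (by simp [ofOver]))

lemma overMap_comp_ofOver {c d : C} (h : d ⟶ c) (x : X.obj (op c)) :
    Over.map h ⋙ ofOver x = ofOver (X.map h.op x) := by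
  have hobj (f : Over d) : (Over.map h ⋙ ofOver x).obj f = (ofOver (X.map h.op x)).obj f :=
    Elts.ext rfl (heq_of_eq (by simp [ofOver]))
  refine Functor.hext hobj fun f g k => ?_
  exact hom_heq (hobj f) (hobj g) HEq.rfl

lemma ofOver_comp_eltsMap {Y : Cᵒᵖ ⥤ Type u} (f : Y ⟶ X) {c : C} (y : Y.obj (op c)) :
    ofOver y ⋙ eltsMap f = ofOver (f.app _ y) := by
  have hobj (g : Over c) : (ofOver y ⋙ eltsMap f).obj g = (ofOver (f.app _ y)).obj g :=
    Elts.ext rfl (heq_of_eq (by simp [ofOver, eltsMap]))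
  refine Functor.hext hobj fun g g' k => ?_
  exact hom_heq (hobj g) (hobj g') HEq.rfl

end Elts

variable {B : Cat.{u, u}}

/-- `((nerve C).obj B).obj (op c)` is only definitionally `Over c ⥤ B`; this gives its elements
that type syntactically, so that rewriting and `Functor.congr_hom` apply to them. -/
def asFunctor {c : C} (P : ((nerve C).obj B).obj (op c)) : Over c ⥤ B := P

lemma asFunctor_nerve_obj_map {c d : C} (h : d ⟶ c) (P : ((nerve C).obj B).obj (op c)) :
    asFunctor (((nerve C).obj B).map h.op P) = Over.map h ⋙ asFunctor P := rfl

lemma asFunctor_elt_eq_of_hom {a b : Elts ((nerve C).obj B)} (g : a ⟶ b) :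
    asFunctor a.elt = Over.map g.1 ⋙ asFunctor b.elt := by
  rw [← asFunctor_nerve_obj_map, g.2]

def nerveCounit (B : Cat.{u, u}) : Elts ((nerve C).obj B) ⥤ B where
  obj a := (asFunctor a.elt).obj (Over.mk (𝟙 a.base))
  map {a b} g := eqToHom (Functor.congr_obj (asFunctor_elt_eq_of_hom g) _) ≫
    (asFunctor b.elt).map
      (Over.homMk g.1 : (Over.map g.1).obj (Over.mk (𝟙 a.base)) ⟶ Over.mk (𝟙 b.base))
  map_id a := by
    rw [Over.mkIdTerminal.eqToHom_comp_map_eq _ (Over.map_obj_mk_id _) _ rfl _ (𝟙 _)]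
    simp
  map_comp {a b c} g h := by
    rw [Category.assoc, Functor.congr_hom (asFunctor_elt_eq_of_hom h)]
    simp only [Functor.comp_map, Category.assoc, eqToHom_trans_assoc, eqToHom_refl,
      Category.id_comp, ← Functor.map_comp]
    refine Over.mkIdTerminal.eqToHom_comp_map_eq (asFunctor c.elt) ?_ _ _ _ _
    rw [Over.map_obj_mk_id, Over.map_obj_mk_id]
    rfl

lemma nerveCounit_map_heq {a b : Elts ((nerve C).obj B)} (g : a ⟶ b) :
    (nerveCounit B).map g ≍ (asFunctor b.elt).map
      (Over.homMk g.1 : (Over.map g.1).obj (Over.mk (𝟙 a.base)) ⟶ Over.mk (𝟙 b.base)) :=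
  eqToHom_comp_heq _ _

def nerveUnit (X : Cᵒᵖ ⥤ Type u) : X ⟶ (nerve C).obj (Cat.of (Elts X)) where
  app c := TypeCat.ofHom fun x => Elts.ofOver (c := c.unop) x
  naturality c d h := by
    ext x
    exact (Elts.overMap_comp_ofOver h.unop x).symm

lemma eltsMap_nerveUnit_comp_nerveCounit (X : Cᵒᵖ ⥤ Type u) :
    eltsMap (nerveUnit X) ⋙ nerveCounit (Cat.of (Elts X)) = 𝟭 (Elts X) := by
  have hobj (a : Elts X) : (eltsMap (nerveUnit X) ⋙ nerveCounit _).obj a = a :=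
    Elts.ofOver_obj_mk_id a.elt
  refine Functor.hext hobj fun a b g => (nerveCounit_map_heq _).trans ?_
  refine Elts.hom_heq ?_ (Elts.ofOver_obj_mk_id b.elt) HEq.rfl
  exact Elts.ext rfl (heq_of_eq (show X.map (𝟙 a.base ≫ g.1).op b.elt = a.elt by simpa using g.2))

lemma ofOver_comp_nerveCounit {c : C} (P : ((nerve C).obj B).obj (op c)) :
    Elts.ofOver P ⋙ nerveCounit B = asFunctor P := by
  have hover (f : Over c) : (Over.map f.hom).obj (Over.mk (𝟙 f.left)) = f :=
    Over.map_obj_mk_id f.hom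
  refine Functor.hext (fun f => congrArg (asFunctor P).obj (hover f)) fun f f' k => ?_
  refine (nerveCounit_map_heq _).trans ?_
  change (asFunctor P).map ((Over.map f'.hom).map (Over.homMk k.left :
    (Over.map k.left).obj (Over.mk (𝟙 f.left)) ⟶ Over.mk (𝟙 f'.left))) ≍ (asFunctor P).map k
  have hsrc : (Over.map f'.hom).obj ((Over.map k.left).obj (Over.mk (𝟙 f.left))) = f :=
    (congrArg (Over.map f'.hom).obj (Over.map_obj_mk_id k.left)).trans (congrArg Over.mk (Over.w k))
  refine Functor.map_heq _ hsrc (hover f') ?_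
  exact (conj_eqToHom_iff_heq _ _ hsrc (hover f')).1 (by ext; simp)

lemma eltsMap_nerve_map_comp_nerveCounit {A : Cat.{u, u}} (F : A ⟶ B) :
    eltsMap ((nerve C).map F) ⋙ nerveCounit B = nerveCounit A ⋙ F.toFunctor := by
  refine Functor.hext (fun _ => rfl) fun a b g => (nerveCounit_map_heq _).trans ?_
  rw [Functor.comp_map, nerveCounit, Functor.map_comp, eqToHom_map, heq_eqToHom_comp_iff]
  rfl

def eltsHomEquiv (X : Cᵒᵖ ⥤ Type u) (B : Cat.{u, u}) :
    (Cat.of (Elts X) ⟶ B) ≃ (X ⟶ (nerve C).obj B) where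
  toFun F := nerveUnit X ≫ (nerve C).map F
  invFun α := (eltsMap α ⋙ nerveCounit B).toCatHom
  left_inv F := by
    ext1
    change eltsMap (nerveUnit X) ⋙ eltsMap ((nerve C).map F) ⋙ nerveCounit B = F.toFunctor
    rw [eltsMap_nerve_map_comp_nerveCounit, ← Functor.assoc, eltsMap_nerveUnit_comp_nerveCounit]
    rfl
  right_inv α := by
    ext c x
    change Elts.ofOver x ⋙ eltsMap α ⋙ nerveCounit B = α.app c x
    rw [← Functor.assoc, Elts.ofOver_comp_eltsMap, ofOver_comp_nerveCounit]
    rfl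

/-- For any small category `C`, the category-of-elements functor
`∫_C : (Cᵒᵖ ⥤ Set) ⥤ Cat` is left adjoint to the `C`-nerve functor
`ν_C : Cat ⥤ (Cᵒᵖ ⥤ Set)`. -/
theorem elementsFunctor_adjunction_nerve (C : Type u) [SmallCategory C] :
    Nonempty (elementsFunctor C ⊣ nerve C) :=
  ⟨Adjunction.mkOfHomEquiv
    { homEquiv := eltsHomEquiv
      homEquiv_naturality_left_symm := fun _ _ => rfl
      homEquiv_naturality_right := fun _ _ => rfl }⟩

end HS
end

section
/- For any small category C, the category-of-elements functor ∫_C : (Cᵒᵖ ⥤ Set) ⥤ Cat preserves all small colimits. -/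
/-!
`∫` is left adjoint to the nerve-like functor `N : Cat ⥤ Cᵒᵖ ⥤ Type`,
`N(D)(c) = Fun(∫ yoneda c, D)`. A functor `F : ∫X ⥤ D` transposes to `x ↦ F ∘ ∫x̂`, where
`x̂ : yoneda c ⟶ X` is the Yoneda map of `x ∈ X(c)`. Conversely, a family `α : X ⟶ N(D)` glues
to `∫α` followed by the counit `∫N(D) ⥤ D`, which evaluates `G : ∫ yoneda c ⥤ D` at the terminal
object `(c, 𝟙 c)`; naturality of `α` is exactly what makes the gluing functorial. Left adjoints
preserve colimits.
-/

open CategoryTheory Opposite Limits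

universe u

namespace HS

variable {C : Type u} [SmallCategory C]

section

variable {X Y : Cᵒᵖ ⥤ Type u}

@[simp]
theorem Elts.comp_val {a b c : Elts X} (f : a ⟶ b) (g : b ⟶ c) : (f ≫ g).1 = f.1 ≫ g.1 := rfl

@[simp]
theorem eltsMap_obj_base (f : Y ⟶ X) (a : Elts Y) : ((eltsMap f).obj a).base = a.base := rfl

@[simp]
theorem eltsMap_map_val (f : Y ⟶ X) {a b : Elts Y} (g : a ⟶ b) : ((eltsMap f).map g).1 = g.1 :=
  rfl

theorem Elts.map_heq {D : Type*} [Category D] (F : Elts X ⥤ D) {c d : C}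
    {x x' : X.obj (op c)} {y y' : X.obj (op d)} (hx : x = x') (hy : y = y')
    (f : (⟨c, x⟩ : Elts X) ⟶ ⟨d, y⟩) (f' : (⟨c, x'⟩ : Elts X) ⟶ ⟨d, y'⟩) (hf : f.1 = f'.1) :
    F.map f ≍ F.map f' := by
  subst hx hy
  rw [Subtype.ext hf]

end

@[simps]
def yonedaEltsToId {c d : C} (f : d ⟶ c) : (⟨d, f⟩ : Elts (yoneda.obj c)) ⟶ ⟨c, 𝟙 c⟩ :=
  ⟨f, Category.comp_id f⟩

def eltsNerve (C : Type u) [SmallCategory C] : Cat.{u, u} ⥤ (Cᵒᵖ ⥤ Type u) where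
  obj D :=
    { obj c := Elts (yoneda.obj c.unop) ⥤ D
      map h := TypeCat.ofHom (eltsMap (yoneda.map h.unop) ⋙ ·)
      map_id c := by
        ext G
        exact congrArg (eltsMap · ⋙ G) (yoneda.map_id c.unop)
      map_comp f g := by
        ext G
        exact congrArg (eltsMap · ⋙ G) (yoneda.map_comp g.unop f.unop) }
  map F := { app _ := TypeCat.ofHom (· ⋙ F.toFunctor) }

theorem eltsNerve_elt_eq_of_hom {D : Cat.{u, u}} {G H : Elts ((eltsNerve C).obj D)} (g : G ⟶ H) :
    G.elt = eltsMap (yoneda.map g.1) ⋙ H.elt :=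
  g.2.symm

def eltsNerveCounit (D : Cat.{u, u}) : Elts ((eltsNerve C).obj D) ⥤ D where
  obj G := G.elt.obj ⟨G.base, 𝟙 G.base⟩
  -- `𝟙 _ ≫ g.1` rather than `g.1`, so that the source is `(eltsMap (yoneda.map g.1)).obj ⟨_, 𝟙 _⟩`
  -- on the nose.
  map {G H} g :=
    eqToHom (congrArg (·.obj ⟨G.base, 𝟙 G.base⟩) (eltsNerve_elt_eq_of_hom g)) ≫
      H.elt.map (yonedaEltsToId (𝟙 G.base ≫ g.1))
  map_id G := by
    apply eq_of_heq
    refine (eqToHom_comp_heq _ _).trans ?_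
    rw [← G.elt.map_id]
    exact Elts.map_heq _ (Category.id_comp _) rfl _ _ (Category.id_comp _)
  map_comp {G H K} f g := by
    apply eq_of_heq
    simp only [Category.assoc]
    refine (eqToHom_comp_heq _ _).trans (HEq.trans ?_ (eqToHom_comp_heq _ _).symm)
    have hH := eltsNerve_elt_eq_of_hom g
    refine HEq.trans (b := K.elt.map ((eltsMap (yoneda.map g.1)).map
      (yonedaEltsToId (𝟙 G.base ≫ f.1)) ≫ yonedaEltsToId (𝟙 H.base ≫ g.1)))
      (Elts.map_heq _ (by simp) rfl _ _
        (by simp : 𝟙 G.base ≫ (f ≫ g).1 = (𝟙 G.base ≫ f.1) ≫ 𝟙 H.base ≫ g.1)) ?_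
    refine (heq_of_eq (Functor.map_comp _ _ _)).trans ?_
    exact heq_comp (congrArg (·.obj ⟨G.base, 𝟙 G.base ≫ f.1⟩) hH).symm
      (congrArg (·.obj ⟨H.base, 𝟙 H.base⟩) hH).symm rfl
      (Functor.hcongr_hom hH _).symm (eqToHom_comp_heq _ _).symm

section

variable {X : Cᵒᵖ ⥤ Type u} {D : Cat.{u, u}}

def toEltsNerve (F : Elts X ⥤ D) : X ⟶ (eltsNerve C).obj D where
  app c := TypeCat.ofHom (fun x => eltsMap (yonedaEquiv.symm x) ⋙ F)
  naturality c c' h := by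
    ext x
    change eltsMap (yonedaEquiv.symm (X.map h x)) ⋙ F =
      eltsMap (yoneda.map h.unop) ⋙ eltsMap (yonedaEquiv.symm x) ⋙ F
    rw [yonedaEquiv_symm_map]
    rfl

theorem eltsMap_toEltsNerve_comp_counit (F : Elts X ⥤ D) :
    eltsMap (toEltsNerve F) ⋙ eltsNerveCounit D = F := by
  apply Functor.hext
  · intro a
    exact congrArg (F.obj ⟨a.base, ·⟩) (show X.map (𝟙 a.base).op a.elt = a.elt by simp)
  · intro a b g
    refine (eqToHom_comp_heq _ _).trans ?_
    exact Elts.map_heq F (x := X.map (𝟙 a.base ≫ g.1).op b.elt) (y := X.map (𝟙 b.base).op b.elt)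
      (by simpa using g.2) (by simp) _ g (by simp)

theorem eltsMap_yonedaEquiv_symm_comp_counit {c : C} (G : ((eltsNerve C).obj D).obj (op c)) :
    eltsMap (yonedaEquiv.symm G) ⋙ eltsNerveCounit D = G := by
  apply Functor.hext
  · intro p
    exact congrArg (G.obj ⟨p.base, ·⟩) (Category.id_comp p.elt)
  · intro p q φ
    refine (eqToHom_comp_heq _ _).trans ?_
    exact Elts.map_heq G (x := (𝟙 p.base ≫ φ.1) ≫ q.elt) (y := 𝟙 q.base ≫ q.elt)
      (by simpa using φ.2) (by simp) _ φ (by simp)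

theorem toEltsNerve_eltsMap_comp_counit (α : X ⟶ (eltsNerve C).obj D) :
    toEltsNerve (eltsMap α ⋙ eltsNerveCounit D) = α := by
  ext c x
  change eltsMap (yonedaEquiv.symm x ≫ α) ⋙ eltsNerveCounit D = α.app c x
  rw [yonedaEquiv_symm_naturality_right]
  exact eltsMap_yonedaEquiv_symm_comp_counit _

end

def elementsAdjunction (C : Type u) [SmallCategory C] : elementsFunctor C ⊣ eltsNerve C :=
  Adjunction.mkOfHomEquiv
    { homEquiv _ D :=
        { toFun F := toEltsNerve F.toFunctor
          invFun α := (eltsMap α ⋙ eltsNerveCounit D).toCatHom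
          left_inv F := congrArg Functor.toCatHom (eltsMap_toEltsNerve_comp_counit F.toFunctor)
          right_inv := toEltsNerve_eltsMap_comp_counit }
      homEquiv_naturality_left_symm _ _ := rfl
      homEquiv_naturality_right _ _ := rfl }

/-- For any small category `C`, the category-of-elements functor
`∫_C : (Cᵒᵖ ⥤ Set) ⥤ Cat` preserves all small colimits. -/
theorem elementsFunctor_preservesColimits (C : Type u) [SmallCategory C] :
    Nonempty (Limits.PreservesColimitsOfSize.{u, u} (elementsFunctor C)) :=
  ⟨(elementsAdjunction C).leftAdjoint_preservesColimits⟩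

end HS
end

section
/- For any small category D, the colimit in Cat of the functor D ⥤ Cat sending each object d to the slice category D/d, and each morphism h : d → d' to the post-composition functor D/h : D/d → D/d', is isomorphic to D itself. -/
open CategoryTheory Opposite Limits

universe u

/-!
A cocone on `Over.mapFunctor D` with apex `E` is a family of functors `L d : D/d ⥤ E` with
`Over.map f ⋙ L d' = L d`. Such a family glues to a functor `G : D ⥤ E` with
`G d = L d (𝟙 d)` and `G f = L d' (f ⟶ 𝟙 d')`, using that `𝟙 d` is sent to the object `f` of
`D/d'` by `Over.map f`; then `Over.forget d ⋙ G = L d`. Uniqueness holds because every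
`f : d ⟶ d'` is the image under `Over.forget d'` of the arrow `f ⟶ 𝟙 d'` of `D/d'`.
-/

namespace CategoryTheory.Over

variable {D : Type*} [Category* D] {E : Type*} [Category* E]

lemma map_hom_obj_mk_id {d : D} (X : Over d) : (map X.hom).obj (mk (𝟙 X.left)) = X :=
  congrArg mk (Category.id_comp X.hom)

lemma functor_ext_of_forget_comp {F G : D ⥤ E} (h : ∀ d, forget d ⋙ F = forget d ⋙ G) :
    F = G :=
  Functor.ext (fun d => Functor.congr_obj (h d) (mk (𝟙 d))) fun {_ d'} f =>
    Functor.congr_hom (h d') (homMk f : mk f ⟶ mk (𝟙 d'))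

section Glue

variable (L : ∀ d : D, Over d ⥤ E) (hL : ∀ ⦃d d' : D⦄ (f : d ⟶ d'), map f ⋙ L d' = L d)
include hL

lemma obj_eq_obj_mk_id_of_compatible {d : D} (X : Over d) :
    (L d).obj X = (L X.left).obj (mk (𝟙 X.left)) := by
  rw [← hL X.hom, Functor.comp_obj, map_hom_obj_mk_id]

def glueMap {d d' : D} (f : d ⟶ d') : (L d).obj (mk (𝟙 d)) ⟶ (L d').obj (mk (𝟙 d')) :=
  eqToHom (obj_eq_obj_mk_id_of_compatible L hL (mk f)).symm ≫
    (L d').map (homMk f : mk f ⟶ mk (𝟙 d'))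

lemma map_eq_glueMap {d : D} {X Y : Over d} (u : X ⟶ Y) :
    (L d).map u = eqToHom (obj_eq_obj_mk_id_of_compatible L hL X) ≫ glueMap L hL u.left ≫
      eqToHom (obj_eq_obj_mk_id_of_compatible L hL Y).symm := by
  have hv := Functor.congr_hom (hL Y.hom).symm (homMk u.left : mk u.left ⟶ mk (𝟙 Y.left))
  have hu : (map Y.hom).map (homMk u.left : mk u.left ⟶ mk (𝟙 Y.left)) =
      eqToHom (congrArg mk (w u)) ≫ u ≫ eqToHom (map_hom_obj_mk_id Y).symm := by
    ext; simp
  simp [glueMap, hv, hu, eqToHom_map]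

def glue : D ⥤ E where
  obj d := (L d).obj (mk (𝟙 d))
  map f := glueMap L hL f
  map_id d := by
    simpa using (map_eq_glueMap L hL (𝟙 (mk (𝟙 d)))).symm
  map_comp {d d' d''} f g := by
    have hf := map_eq_glueMap L hL (homMk f : mk (f ≫ g) ⟶ mk g)
    have hfg : (homMk (f ≫ g) : mk (f ≫ g) ⟶ mk (𝟙 d'')) =
        (homMk f : mk (f ≫ g) ⟶ mk g) ≫ (homMk g : mk g ⟶ mk (𝟙 d'')) := by
      ext; simp
    simp [glueMap, hfg, hf]
    rfl

lemma forget_comp_glue (d : D) : forget d ⋙ glue L hL = L d :=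
  Functor.hext (fun X => (obj_eq_obj_mk_id_of_compatible L hL X).symm) fun _ _ u =>
    ((conj_eqToHom_iff_heq _ _ _ (obj_eq_obj_mk_id_of_compatible L hL _)).1
      (map_eq_glueMap L hL u)).symm

end Glue

end CategoryTheory.Over

/-- For any small category `D`, the colimit in `Cat` of the functor
`D ⥤ Cat` sending `d` to the slice category `D/d` (and `h : d ⟶ d'` to the
post-composition functor `D/h : D/d ⥤ D/d'`) is `D` itself: the cocone on
`Over.mapFunctor D` with apex `D`, whose legs are the forgetful functors
`D/d ⥤ D`, is a colimit cocone. -/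
theorem colimit_of_slices_is_self (D : Type u) [SmallCategory D] :
    Nonempty (IsColimit (Limits.Cocone.mk (Cat.of D)
      { app := fun d => (Over.forget d : Over d ⥤ D).toCatHom
        naturality := fun d d' h => by
          show (Over.map h ⋙ Over.forget d').toCatHom = ((Over.forget d : Over d ⥤ D) ⋙ 𝟭 D).toCatHom
          rfl } : Limits.Cocone (Over.mapFunctor D))) := by
  let leg (s : Cocone (Over.mapFunctor D)) (d : D) : Over d ⥤ s.pt := (s.ι.app d).toFunctor
  have compatible (s : Cocone (Over.mapFunctor D)) :
      ∀ ⦃d d' : D⦄ (f : d ⟶ d'), Over.map f ⋙ leg s d' = leg s d :=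
    fun _ _ f => congrArg Cat.Hom.toFunctor (s.w f)
  exact ⟨{
    desc := fun s => (Over.glue (leg s) (compatible s)).toCatHom
    fac := fun s d => Cat.ext (Over.forget_comp_glue (leg s) (compatible s) d)
    uniq := fun s m hm => Cat.ext <| Over.functor_ext_of_forget_comp fun d =>
      (congrArg Cat.Hom.toFunctor (hm d)).trans (Over.forget_comp_glue (leg s) (compatible s) d).symm }⟩
end

section
/- Let C be a small category and f : Y ⟶ X a morphism of presheaves on C. For each object c of C, let η_X(c) : X(c) → Fun(C/c, ∫X) send x to the functor taking (g : d → c) to the element (d, X(g)(x)) of ∫X, and similarly for η_Y. Then for every c, the square of sets with top map η_Y(c) : Y(c) → Fun(C/c, ∫Y), bottom map η_X(c) : X(c) → Fun(C/c, ∫X), left map f_c, and right map post-composition with ∫f : ∫Y → ∫X, commutes and is a pullback. (Equivalently: the naturality square of the unit η of the adjunction ∫ ⊣ ν at f is a pullback of presheaves.) -/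
/-!
A functor `G : C/c ⥤ ∫Z` lying over the forgetful functor `C/c ⥤ C` is determined by its value
at `𝟙 c`, since every `g : d ⟶ c` is a morphism `g ⟶ 𝟙 c` of `C/c`; hence `η_Z(c)` is a bijection
onto such functors. As `∫f` commutes with the projections to `C`, a pair `(G, x)` with
`G ⋙ ∫f = η_X(x)` has `G` over `C`, so `G = η_Y(y)`, and then `f y = x` by injectivity of `η_X`.
-/

open CategoryTheory Opposite Limits

universe u

namespace HS

variable {C : Type u} [SmallCategory C]

/-- The unit of the adjunction `∫ ⊣ ν` at a presheaf `X`, componentwise: an element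
`x ∈ X(c)` is sent to the functor `C/c ⥤ ∫X` taking `g : d ⟶ c` to `(d, X(g)(x))`. -/
def etaApp (X : Cᵒᵖ ⥤ Type u) {c : C} (x : X.obj (op c)) : Over c ⥤ Elts X where
  obj g := ⟨g.left, X.map g.hom.op x⟩
  map {g g'} m := ⟨m.left, by
    rw [← types_comp_apply (X.map g'.hom.op) (X.map m.left.op), ← X.map_comp, ← op_comp,
      Over.w m]⟩

instance (Z : Cᵒᵖ ⥤ Type u) : (proj Z).Faithful where
  map_injective h := Subtype.ext h

lemma _root_.CategoryTheory.Functor.ext_of_comp_faithful {D E E' : Type*}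
    [Category D] [Category E] [Category E']
    {F G : D ⥤ E'} (H : E' ⥤ E) [H.Faithful] (hobj : ∀ X, F.obj X = G.obj X)
    (hcomp : F ⋙ H = G ⋙ H) : F = G :=
  CategoryTheory.Functor.ext hobj fun X Y f => H.map_injective <| by
    simpa [eqToHom_map] using Functor.congr_hom hcomp f

lemma Elts.eq_mk_of_hom {Z : Cᵒᵖ ⥤ Type u} {a b : Elts Z} {d e : C} (u : a ⟶ b)
    (ha : a.base = d) (hb : b.base = e) (g : d ⟶ e)
    (hu : u.1 = eqToHom ha ≫ g ≫ eqToHom hb.symm) :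
    a = ⟨d, Z.map g.op (Z.map (eqToHom hb.symm).op b.elt)⟩ := by
  obtain ⟨a, x⟩ := a
  obtain ⟨b, y⟩ := b
  obtain ⟨u, hux⟩ := u
  dsimp only at ha hb hu hux
  subst ha hb hu
  simp [← hux]

lemma etaApp_comp_eltsMap {Y X : Cᵒᵖ ⥤ Type u} (f : Y ⟶ X) {c : C} (y : Y.obj (op c)) :
    etaApp Y y ⋙ eltsMap f = etaApp X (f.app (op c) y) :=
  Functor.ext_of_comp_faithful (proj X)
    (fun g => by simp [etaApp, eltsMap, NatTrans.naturality_apply]) rfl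

lemma etaApp_obj_mk_id (Z : Cᵒᵖ ⥤ Type u) {c : C} (z : Z.obj (op c)) :
    (etaApp Z z).obj (Over.mk (𝟙 c)) = ⟨c, z⟩ := by
  simp [etaApp]

lemma etaApp_injective (Z : Cᵒᵖ ⥤ Type u) (c : C) :
    Function.Injective (fun z : Z.obj (op c) => etaApp Z z) := by
  intro z z' h
  simpa [etaApp_obj_mk_id] using Functor.congr_obj h (Over.mk (𝟙 c))

lemma exists_etaApp_eq_of_comp_proj {Z : Cᵒᵖ ⥤ Type u} {c : C} (G : Over c ⥤ Elts Z)
    (hG : G ⋙ proj Z = Over.forget c) : ∃ z, etaApp Z z = G := by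
  have hbase (g : Over c) : (G.obj g).base = g.left := Functor.congr_obj hG g
  refine ⟨Z.map (eqToHom (hbase (Over.mk (𝟙 c))).symm).op (G.obj (Over.mk (𝟙 c))).elt, ?_⟩
  refine Functor.ext_of_comp_faithful (proj Z) (fun g => ?_) (hG ▸ rfl)
  exact (Elts.eq_mk_of_hom (G.map (Over.homMk g.hom : g ⟶ Over.mk (𝟙 c))) (hbase g) (hbase _)
    g.hom (Functor.congr_hom hG _)).symm

/-- For a morphism of presheaves `f : Y ⟶ X` and every object `c` of `C`,
the naturality square of the unit `η` of the adjunction `∫ ⊣ ν` — with top map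
`η_Y(c) : Y(c) → Fun(C/c, ∫Y)`, bottom map `η_X(c) : X(c) → Fun(C/c, ∫X)`, left map `f_c`
and right map post-composition with `∫f : ∫Y ⥤ ∫X` — commutes and is a pullback of sets. -/
theorem eta_naturality_isPullback (C : Type u) [SmallCategory C]
    {Y X : Cᵒᵖ ⥤ Type u} (f : Y ⟶ X) (c : C) :
    IsPullback (f := TypeCat.ofHom fun G : Over c ⥤ Elts Y => G ⋙ eltsMap f)
      (g := TypeCat.ofHom fun x : X.obj (op c) => etaApp X x)
      (fst := TypeCat.ofHom fun y : Y.obj (op c) => etaApp Y y) (snd := f.app (op c)) := by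
  rw [Types.isPullback_iff]
  refine ⟨?_, fun y y' h => etaApp_injective Y c h.1, fun G x hGx => ?_⟩
  · ext y
    exact etaApp_comp_eltsMap f y
  · have hG : G ⋙ proj Y = Over.forget c := congrArg (· ⋙ proj X) hGx
    obtain ⟨y, rfl⟩ := exists_etaApp_eq_of_comp_proj G hG
    refine ⟨y, rfl, etaApp_injective X c ?_⟩
    exact (etaApp_comp_eltsMap f y).symm.trans hGx

end HS
end

section
/- Let C be a small category and f : Y ⟶ X a morphism of presheaves on C. For each object c of C define: a map Y(c) → Fun(C/c, Set∙ᵒᵖ) sending y to the functor (g : d → c) ↦ the pointed set (f_d⁻¹{X(g)(f_c(y))}, Y(g)(y)); and a map X(c) → Fun(C/c, Setᵒᵖ) sending x to the functor (g : d → c) ↦ the fiber f_d⁻¹{X(g)(x)}. Then for every c, the square with these two maps as top and bottom, f_c on the left, and post-composition with the forgetful functor Set∙ᵒᵖ → Setᵒᵖ on the right, commutes and is a pullback of sets. (Equivalently: the map of presheaves 𝒱̇ = ν(Set∙ᵒᵖ) → 𝒱 = ν(Setᵒᵖ) classifies all natural transformations Y ⟶ X via a pullback square in presheaves.) -/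
open CategoryTheory Opposite Limits

universe u

namespace HS

variable {C : Type u} [SmallCategory C]

/-- The fiber of a map of presheaves `f : Y ⟶ X` over an element `x ∈ X(d)`. -/
def fib {Y X : Cᵒᵖ ⥤ Type u} (f : Y ⟶ X) {d : C} (x : X.obj (op d)) : Type u :=
  {y : Y.obj (op d) // f.app (op d) y = x}

lemma fib_map {Y X : Cᵒᵖ ⥤ Type u} (f : Y ⟶ X) {d d' : C} (m : d ⟶ d')
    {x : X.obj (op d')} (y : fib f x) : f.app (op d) (Y.map m.op y.1) = X.map m.op x := by
  rw [FunctorToTypes.naturality, y.2]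

/-- The classifying functor `C/c ⥤ Setᵒᵖ` of a map of presheaves `f : Y ⟶ X` at an
element `x ∈ X(c)`: it sends `(g : d ⟶ c)` to the fiber `f_d⁻¹{X(g)(x)}`. -/
def classify {Y X : Cᵒᵖ ⥤ Type u} (f : Y ⟶ X) {c : C} (x : X.obj (op c)) :
    Over c ⥤ (Type u)ᵒᵖ where
  obj g := op (fib f (X.map g.hom.op x))
  map {g g'} m :=
    Quiver.Hom.op
      (show fib f (X.map g'.hom.op x) ⟶ fib f (X.map g.hom.op x) from
        TypeCat.ofHom fun y => ⟨Y.map m.left.op y.1, by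
          change f.app (op g.left) (Y.map m.left.op y.1) = X.map g.hom.op x
          rw [fib_map f m.left y, ← types_comp_apply (X.map g'.hom.op) (X.map m.left.op),
            ← X.map_comp, ← op_comp, Over.w m]⟩)
  map_id g := by
    apply Quiver.Hom.unop_inj
    ext y
    apply Subtype.ext
    change Y.map (𝟙 g.left).op y.1 = y.1
    rw [op_id, Y.map_id]
    rfl
  map_comp {g g' g''} m m' := by
    apply Quiver.Hom.unop_inj
    ext y
    apply Subtype.ext
    change Y.map (m.left ≫ m'.left).op y.1 = Y.map m.left.op (Y.map m'.left.op y.1)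
    rw [op_comp, Y.map_comp]
    rfl

/-- The pointed classifying functor `C/c ⥤ Set∙ᵒᵖ` of a map of presheaves `f : Y ⟶ X` at
an element `y ∈ Y(c)`: it sends `(g : d ⟶ c)` to the pointed set
`(f_d⁻¹{X(g)(f_c(y))}, Y(g)(y))`. -/
def classifyDot {Y X : Cᵒᵖ ⥤ Type u} (f : Y ⟶ X) {c : C} (y : Y.obj (op c)) :
    Over c ⥤ Pointed.{u}ᵒᵖ where
  obj g := op ⟨fib f (X.map g.hom.op (f.app (op c) y)),
    ⟨Y.map g.hom.op y, by rw [FunctorToTypes.naturality]⟩⟩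
  map {g g'} m :=
    Quiver.Hom.op
      (show (⟨fib f (X.map g'.hom.op (f.app (op c) y)), _⟩ : Pointed.{u}) ⟶
          ⟨fib f (X.map g.hom.op (f.app (op c) y)), _⟩ from
        ⟨fun z => ⟨Y.map m.left.op z.1, by
            change f.app (op g.left) (Y.map m.left.op z.1) = X.map g.hom.op (f.app (op c) y)
            rw [fib_map f m.left z, ← types_comp_apply (X.map g'.hom.op) (X.map m.left.op),
              ← X.map_comp, ← op_comp, Over.w m]⟩, by
          apply Subtype.ext
          change Y.map m.left.op (Y.map g'.hom.op y) = Y.map g.hom.op y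
          rw [← types_comp_apply (Y.map g'.hom.op) (Y.map m.left.op), ← Y.map_comp,
            ← op_comp, Over.w m]⟩)
  map_id g := by
    apply Quiver.Hom.unop_inj
    apply Pointed.Hom.ext
    funext z
    apply Subtype.ext
    change Y.map (𝟙 g.left).op z.1 = z.1
    rw [op_id, Y.map_id]
    rfl
  map_comp {g g' g''} m m' := by
    apply Quiver.Hom.unop_inj
    apply Pointed.Hom.ext
    funext z
    apply Subtype.ext
    change Y.map (m.left ≫ m'.left).op z.1 = Y.map m.left.op (Y.map m'.left.op z.1)
    rw [op_comp, Y.map_comp]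
    rfl

/-! An element of the pullback is a functor `L : C/c ⥤ Set∙ᵒᵖ` lying over `classify f x`.
Since `𝟙 c` is terminal in `C/c` and pointed maps preserve base points, such a lift is
determined by its base point at `𝟙 c`, an element `y` of `f_c⁻¹{x}`; and `classifyDot f y`
is a lift with that base point. So `y ↦ (classifyDot f y, f_c y)` is a bijection onto the
pullback. -/

lemma pointed_ext {P Q : Pointed.{u}} (hX : P.X = Q.X) (hpt : P.point ≍ Q.point) : P = Q := by
  cases P; cases Q; cases hX; cases hpt; rfl

section PointedLift

variable {D : Type*} [Category D]

lemma map_unop_heq_of_eq {F G : D ⥤ (Type u)ᵒᵖ} (h : F = G) {d d' : D} (m : d ⟶ d')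
    {z : (F.obj d').unop} {z' : (G.obj d').unop} (hz : z ≍ z') :
    (F.map m).unop z ≍ (G.map m).unop z' := by
  subst h; cases eq_of_heq hz; rfl

lemma point_heq_of_comp_forget_eq {L L' : D ⥤ Pointed.{u}ᵒᵖ}
    (h : L ⋙ (forget Pointed.{u}).op = L' ⋙ (forget Pointed.{u}).op) {d d' : D} (m : d ⟶ d')
    (hpt : (L.obj d').unop.point ≍ (L'.obj d').unop.point) :
    (L.obj d).unop.point ≍ (L'.obj d).unop.point := by
  rw [← (L.map m).unop.map_point, ← (L'.map m).unop.map_point]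
  exact map_unop_heq_of_eq h m hpt

lemma functor_eq_of_comp_forget_eq {L L' : D ⥤ Pointed.{u}ᵒᵖ}
    (h : L ⋙ (forget Pointed.{u}).op = L' ⋙ (forget Pointed.{u}).op)
    (hpt : ∀ d, (L.obj d).unop.point ≍ (L'.obj d).unop.point) : L = L' := by
  have hobj : ∀ d, L.obj d = L'.obj d := fun d =>
    unop_injective (pointed_ext (congrArg unop (Functor.congr_obj h d)) (hpt d))
  refine CategoryTheory.Functor.ext hobj fun d d' m => (forget Pointed.{u}).op.map_injective ?_
  rw [Functor.map_comp, Functor.map_comp, eqToHom_map, eqToHom_map]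
  exact Functor.congr_hom h m

lemma functor_eq_of_comp_forget_eq_of_isTerminal {t : D} (ht : IsTerminal t)
    {L L' : D ⥤ Pointed.{u}ᵒᵖ}
    (h : L ⋙ (forget Pointed.{u}).op = L' ⋙ (forget Pointed.{u}).op)
    (hpt : (L.obj t).unop.point ≍ (L'.obj t).unop.point) : L = L' :=
  functor_eq_of_comp_forget_eq h fun d => point_heq_of_comp_forget_eq h (ht.from d) hpt

end PointedLift

lemma fib_heq_iff {Y X : Cᵒᵖ ⥤ Type u} (f : Y ⟶ X) {d : C} {x x' : X.obj (op d)}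
    (h : x = x') {a : fib f x} {b : fib f x'} : a ≍ b ↔ a.1 = b.1 := by
  subst h; exact heq_iff_eq.trans Subtype.ext_iff

/-- For any morphism of presheaves `f : Y ⟶ X` on a small category `C`
and every object `c`, the square of sets with top map `Y(c) → Fun(C/c, Set∙ᵒᵖ)`,
`y ↦ ((g : d ⟶ c) ↦ (f_d⁻¹{X(g)(f_c(y))}, Y(g)(y)))`, bottom map
`X(c) → Fun(C/c, Setᵒᵖ)`, `x ↦ ((g : d ⟶ c) ↦ f_d⁻¹{X(g)(x)})`, left map `f_c`, and right
map post-composition with the (opposite of the) forgetful functor `Set∙ᵒᵖ ⥤ Setᵒᵖ`,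
commutes and is a pullback of sets (in `Type (u+1)`, after lifting the small sets
`Y(c)` and `X(c)`). -/
theorem classifyDot_isPullback (C : Type u) [SmallCategory C]
    {Y X : Cᵒᵖ ⥤ Type u} (f : Y ⟶ X) (c : C) :
    IsPullback
      (show ULift.{u + 1} (Y.obj (op c)) ⟶ (Over c ⥤ Pointed.{u}ᵒᵖ) from
        TypeCat.ofHom fun y => classifyDot f y.down)
      (show ULift.{u + 1} (Y.obj (op c)) ⟶ ULift.{u + 1} (X.obj (op c)) from
        TypeCat.ofHom fun y => ⟨f.app (op c) y.down⟩)
      (show (Over c ⥤ Pointed.{u}ᵒᵖ) ⟶ (Over c ⥤ (Type u)ᵒᵖ) from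
        TypeCat.ofHom fun L => L ⋙ (forget Pointed.{u}).op)
      (show ULift.{u + 1} (X.obj (op c)) ⟶ (Over c ⥤ (Type u)ᵒᵖ) from
        TypeCat.ofHom fun x => classify f x.down) := by
  rw [Types.isPullback_iff]
  refine ⟨rfl, ?_, ?_⟩
  · rintro ⟨a⟩ ⟨b⟩ ⟨hdot, hf⟩
    change classifyDot f a = classifyDot f b at hdot
    change ULift.up (f.app (op c) a) = ULift.up (f.app (op c) b) at hf
    have hpt := congr_arg_heq (fun L => (L.obj (Over.mk (𝟙 c))).unop.point) hdot
    have hval : Y.map (𝟙 c).op a = Y.map (𝟙 c).op b :=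
      (fib_heq_iff f (congrArg (X.map (𝟙 c).op) (ULift.up_injective hf))).1 hpt
    simpa using hval
  · rintro L ⟨x⟩ hL
    change L ⋙ (forget Pointed.{u}).op = classify f x at hL
    have hX : (L.obj (Over.mk (𝟙 c))).unop.X = fib f (X.map (𝟙 c).op x) :=
      congrArg unop (Functor.congr_obj hL _)
    let p : fib f (X.map (𝟙 c).op x) := cast hX (L.obj (Over.mk (𝟙 c))).unop.point
    have hp : f.app (op c) p.1 = x := by simpa using p.2
    refine ⟨⟨p.1⟩, functor_eq_of_comp_forget_eq_of_isTerminal Over.mkIdTerminal ?_ ?_,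
      congrArg ULift.up hp⟩
    · change classify f (f.app (op c) p.1) = _
      rw [hp, hL]
    · refine ((fib_heq_iff f (by rw [hp]; rfl)).2 ?_).trans (cast_heq hX _)
      change Y.map (𝟙 c).op p.1 = p.1
      simp

end HS
end

section
/- Let F : C ⥤ D be a functor between small categories and c an object of C. Given any functor Q : D/F(c) ⥤ Setᵒᵖ and any functor L : C/c ⥤ Set∙ᵒᵖ such that U ∘ L = Q ∘ (F/c), where U : Set∙ᵒᵖ → Setᵒᵖ is the opposite of the forgetful functor, there exists a unique functor M : D/F(c) ⥤ Set∙ᵒᵖ with U ∘ M = Q and M ∘ (F/c) = L. (Equivalently: for every object c, the square of sets with horizontal maps given by precomposition with F/c from Fun(D/F(c), Set∙ᵒᵖ) to Fun(C/c, Set∙ᵒᵖ) and from Fun(D/F(c), Setᵒᵖ) to Fun(C/c, Setᵒᵖ), and vertical maps given by postcomposition with U, is a pullback; hence the base-change comparison square F*𝒱_D → 𝒱_C over F*𝒱̇_D → 𝒱̇_C is a pullback of presheaves on C.) -/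
/-!
If `J` has a terminal object `T`, a lift of `Q : J ⥤ Typeᵒᵖ` through the forgetful functor
`Pointedᵒᵖ ⥤ Typeᵒᵖ` is the same thing as a point of `Q(T)`: the base point of `Q(X)` must be the
image of that point under the map `Q(T) → Q(X)` induced by the unique arrow `X ⟶ T`.
`Over.post F` sends the terminal object `c/c` to a terminal object of `D/F(c)`, so both the lift
`M` and its restriction along `Over.post F` are determined by one point, which `L` supplies.
-/

open CategoryTheory Limits Opposite

universe u

lemma CategoryTheory.Functor.ext_of_comp_faithful_s14 {A B B' : Type*} [Category A] [Category B]
    [Category B'] (U : B ⥤ B') [U.Faithful] {M M' : A ⥤ B} (hobj : ∀ X, M.obj X = M'.obj X)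
    (hcomp : M ⋙ U = M' ⋙ U) : M = M' :=
  Functor.ext hobj fun X Y f => U.map_injective <| by
    simpa only [Functor.comp_map, Functor.map_comp, eqToHom_map] using Functor.congr_hom hcomp f

section PointedLift

variable {J K : Type*} [Category J] [Category K]

def pointedLift {T : J} (Q : J ⥤ (Type u)ᵒᵖ) (hT : IsTerminal T) (p : (Q.obj T).unop) :
    J ⥤ Pointed.{u}ᵒᵖ where
  obj X := op ⟨(Q.obj X).unop, (Q.map (hT.from X)).unop p⟩
  map {X Y} f := Quiver.Hom.op
    { toFun := (Q.map f).unop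
      map_point := by
        rw [hT.hom_ext (hT.from X) (f ≫ hT.from Y), Q.map_comp]
        rfl }

lemma pointedLift_comp_forget {T : J} (Q : J ⥤ (Type u)ᵒᵖ) (hT : IsTerminal T)
    (p : (Q.obj T).unop) : pointedLift Q hT p ⋙ (forget Pointed.{u}).op = Q :=
  rfl

lemma pointedLift_obj_terminal_point {T : J} (Q : J ⥤ (Type u)ᵒᵖ) (hT : IsTerminal T)
    (p : (Q.obj T).unop) : ((pointedLift Q hT p).obj T).unop.point = p := by
  simp only [pointedLift, hT.hom_ext (hT.from T) (𝟙 T), Q.map_id]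
  rfl

lemma eq_pointedLift {T : J} (M : J ⥤ Pointed.{u}ᵒᵖ) (hT : IsTerminal T)
    {Q : J ⥤ (Type u)ᵒᵖ} (hM : M ⋙ (forget Pointed.{u}).op = Q) {p : (Q.obj T).unop}
    (hp : (M.obj T).unop.point ≍ p) : M = pointedLift Q hT p := by
  subst hM
  obtain rfl := eq_of_heq hp
  refine Functor.ext_of_comp_faithful_s14 (forget Pointed.{u}).op (fun X => ?_) rfl
  change M.obj X = op ⟨(M.obj X).unop.X, (M.map (hT.from X)).unop.toFun (M.obj T).unop.point⟩
  rw [(M.map (hT.from X)).unop.map_point]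

theorem existsUnique_lift_forget_pointed_of_isTerminal {T : J} (G : J ⥤ K) (hT : IsTerminal T)
    (hGT : IsTerminal (G.obj T)) (Q : K ⥤ (Type u)ᵒᵖ) (L : J ⥤ Pointed.{u}ᵒᵖ)
    (hL : L ⋙ (forget Pointed.{u}).op = G ⋙ Q) :
    ∃! M : K ⥤ Pointed.{u}ᵒᵖ, M ⋙ (forget Pointed.{u}).op = Q ∧ G ⋙ M = L := by
  obtain ⟨p, hp⟩ : ∃ p : (Q.obj (G.obj T)).unop, (L.obj T).unop.point ≍ p :=
    ⟨_, (cast_heq (congrArg unop (Functor.congr_obj hL T)) _).symm⟩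
  refine ⟨pointedLift Q hGT p, ⟨pointedLift_comp_forget Q hGT p, ?_⟩, ?_⟩
  · rw [eq_pointedLift L hT hL hp]
    exact eq_pointedLift _ hT rfl (heq_of_eq (pointedLift_obj_terminal_point Q hGT p))
  · rintro M ⟨hM, rfl⟩
    exact eq_pointedLift M hGT hM hp

end PointedLift

noncomputable def Over.isTerminalPostObjMkId {C D : Type*} [Category C] [Category D]
    (F : C ⥤ D) (c : C) : IsTerminal ((Over.post F).obj (Over.mk (𝟙 c))) :=
  Over.mkIdTerminal.ofIso (Over.isoMk (Iso.refl _) (by simp [Over.post]))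

/-- Let `F : C ⥤ D` be a functor between small categories and `c : C`.
Given `Q : D/F(c) ⥤ Setᵒᵖ` and `L : C/c ⥤ Set∙ᵒᵖ` with `U ∘ L = Q ∘ (F/c)`, where
`U : Set∙ᵒᵖ ⥤ Setᵒᵖ` is the opposite of the forgetful functor, there is a unique
`M : D/F(c) ⥤ Set∙ᵒᵖ` with `U ∘ M = Q` and `M ∘ (F/c) = L`.  (Hence the base-change
comparison square of the universes `𝒱` is a pullback of presheaves.) -/
theorem unique_pointed_lift {C : Type u} {D : Type u} [SmallCategory C] [SmallCategory D]
    (F : C ⥤ D) (c : C)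
    (Q : Over (F.obj c) ⥤ (Type u)ᵒᵖ) (L : Over c ⥤ Pointed.{u}ᵒᵖ)
    (hL : L ⋙ (forget Pointed.{u}).op = (Over.post F : Over c ⥤ Over (F.obj c)) ⋙ Q) :
    ∃! M : Over (F.obj c) ⥤ Pointed.{u}ᵒᵖ,
      M ⋙ (forget Pointed.{u}).op = Q ∧ (Over.post F : Over c ⥤ Over (F.obj c)) ⋙ M = L :=
  existsUnique_lift_forget_pointed_of_isTerminal (Over.post F) Over.mkIdTerminal
    (Over.isTerminalPostObjMkId F c) Q L hL
end

section
/- Let C be a small category, c an object of C, and κ a cardinal (e.g., strongly inaccessible). There is a bijection between the set of functors C/c ⥤ Set∙,κᵒᵖ and the set of pairs (A, a) where A : (C/c)ᵒᵖ ⥤ Set_κ is a presheaf on the slice category C/c and a ∈ A(1_c) is an element of the value of A at the identity of c. (This identifies the nerve universe 𝒱̇_κ(c) = Fun(C/c, Set∙,κᵒᵖ) with the Hofmann–Streicher universe's total presheaf E(c) = Σ_{A ∈ U(c)} A(1_c).) -/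
open CategoryTheory Opposite Limits

universe u

namespace HS

variable {C : Type u} [SmallCategory C]

/-- The full subcategory `Set_α` of `Set` on the `α`-small sets (cardinality `< α`). -/
def SmallSet (α : Cardinal.{u}) : Type (u + 1) :=
  ObjectProperty.FullSubcategory (fun S : Type u => Cardinal.mk S < α)

instance (α : Cardinal.{u}) : Category.{u} (SmallSet α) :=
  ObjectProperty.FullSubcategory.category _

/-- The category `Set∙,α` of `α`-small pointed sets. -/
def SmallPointed (α : Cardinal.{u}) : Type (u + 1) :=
  ObjectProperty.FullSubcategory (fun P : Pointed.{u} => Cardinal.mk P.X < α)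

instance (α : Cardinal.{u}) : Category.{u} (SmallPointed α) :=
  ObjectProperty.FullSubcategory.category _


/-!
A functor into pointed sets is a set-valued functor `A` together with a compatible choice of
points, i.e. a section of `A`. For a presheaf on `C/c` these points are all restrictions of the
one at the terminal object `1_c`, so sections of `A` are exactly elements of `A(1_c)`.
-/

abbrev SmallSet.incl (κ : Cardinal.{u}) : SmallSet κ ⥤ Type u :=
  ObjectProperty.ι _

def leftOpEquiv {C D : Type*} [Category C] [Category D] : (C ⥤ Dᵒᵖ) ≃ (Cᵒᵖ ⥤ D) where
  toFun := Functor.leftOp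
  invFun := Functor.rightOp
  left_inv _ := rfl
  right_inv _ := rfl

section

variable {J : Type*} [Category J]

def sectionsEquivOfIsInitial (P : J ⥤ Type*) {i : J} (hi : IsInitial i) :
    P.sections ≃ P.obj i where
  toFun s := s.1 i
  invFun a := ⟨fun j => P.map (hi.to j) a, fun f => by
    rw [← Functor.map_comp_apply, hi.hom_ext (hi.to _ ≫ f)]⟩
  left_inv s := by
    ext j
    exact s.2 (hi.to j)
  right_inv a := by
    simp

def smallPointedFunctorEquivSections {κ : Cardinal.{u}} :
    (J ⥤ SmallPointed κ) ≃ Σ A : J ⥤ SmallSet κ, (A ⋙ SmallSet.incl κ).sections where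
  toFun P :=
    ⟨{ obj := fun j => ⟨(P.obj j).obj.X, (P.obj j).property⟩
       map := fun f => ⟨TypeCat.ofHom (P.map f).hom.toFun⟩ },
    ⟨fun j => (P.obj j).obj.point, fun f => (P.map f).hom.map_point⟩⟩
  invFun A :=
    { obj := fun j => ⟨⟨(A.1.obj j).obj, A.2.1 j⟩, (A.1.obj j).property⟩
      map := fun f => ⟨⟨(A.1.map f).hom, A.2.2 f⟩⟩ }
  left_inv _ := rfl
  right_inv _ := rfl

end

/-- For a small category `C`, an object `c` of `C`, and a cardinal `κ`,
there is a bijection between functors `C/c ⥤ Set∙,κᵒᵖ` and pairs `(A, a)` of a presheaf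
`A : (C/c)ᵒᵖ ⥤ Set_κ` on the slice category together with an element `a ∈ A(1_c)` of its
value at the identity of `c` (the terminal object of `C/c`).  This identifies the nerve
universe `𝒱̇_κ(c)` with the total presheaf `E(c) = Σ_{A ∈ U(c)} A(1_c)` of the
Hofmann–Streicher universe. -/
theorem pointed_functors_equiv_pointed_presheaves (C : Type u) [SmallCategory C] (c : C)
    (κ : Cardinal.{u}) :
    Nonempty ((Over c ⥤ (SmallPointed κ)ᵒᵖ) ≃
      Σ A : (Over c)ᵒᵖ ⥤ SmallSet κ, (A.obj (op (Over.mk (𝟙 c)))).obj) :=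
  ⟨leftOpEquiv.trans <| smallPointedFunctorEquivSections.trans <|
    Equiv.sigmaCongrRight fun _ => sectionsEquivOfIsInitial _ Over.mkIdTerminal.op⟩

end HS
end
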